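/- Let (A, α) and (B, β) be unital Z₂-graded C*-algebras, ω a state on A and φ a state on B. The product functional ω × φ on the algebraic Fermi tensor product A ⊛₀ B, defined on elementary tensors by (ω × φ)(a ⊛ b) = ω(a)φ(b), is positive if and only if at least one of ω, φ is even. -/

import Mathlib

open scoped ComplexOrder TensorProduct

/-- A state on a unital complex *-algebra, written as a plain function. -/
def IsStateOn {R : Type*} [Ring R] [Algebra ℂ R] [StarRing R] (f : R → ℂ) : Prop :=
  (∀ x y, f (x + y) = f x + f y) ∧ (∀ (c : ℂ) (x), f (c • x) = c * f x) ∧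
    f 1 = 1 ∧ ∀ x, 0 ≤ f (star x * x)

/-!
Write every element of `A ⊛₀ B` as a sum of elementary tensors `a ⊛ b` of homogeneous elements.
Expanding `F (x* x)` then gives `∑ ε ε' ω (aᵢ* aⱼ) φ (bᵢ* bⱼ)` with Klein signs `ε ε'`. If `ω` is
even it kills the terms where `aᵢ* aⱼ` is odd, and on the others the signs cancel; if `φ` is even
the surviving signs split as `εᵢ εⱼ` and are absorbed into the `aᵢ`. Either way the sum is the sum
of the entries of a Hadamard product of two Gram matrices, nonnegative by Schur's product theorem.
Conversely, if neither state is even pick odd `a`, `b` with `ω a ≠ 0 ≠ φ b`: the element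
`a ⊛ 1 + 1 ⊛ b` has `F (x* x)` with imaginary part `-2 Im (ω a · conj (φ b))`, and rescaling `a`
makes it nonzero.
-/

open ComplexConjugate

namespace IsStateOn

variable {R : Type*} [Ring R] [Algebra ℂ R] [StarRing R] {f : R → ℂ}

def toLinearMap (hf : IsStateOn f) : R →ₗ[ℂ] ℂ where
  toFun := f
  map_add' := hf.1
  map_smul' := hf.2.1

@[simp] lemma toLinearMap_apply (hf : IsStateOn f) (x : R) : hf.toLinearMap x = f x := rfl

lemma im_apply_star_mul_self (hf : IsStateOn f) (x : R) : (f (star x * x)).im = 0 :=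
  (Complex.nonneg_iff.mp (hf.2.2.2 x)).2.symm

variable [StarModule ℂ R]

lemma apply_star_mul_swap (hf : IsStateOn f) (x y : R) :
    f (star y * x) = conj (f (star x * y)) := by
  have key : ∀ z : ℂ, (z * f (star x * y) + conj z * f (star y * x)).im = 0 := by
    intro z
    have h := hf.im_apply_star_mul_self (x + z • y)
    simp only [star_add, star_smul, add_mul, mul_add, smul_mul_assoc, mul_smul_comm,
      ← hf.toLinearMap_apply, map_add, map_smul, smul_eq_mul, Complex.add_im] at h
    simp only [toLinearMap_apply, hf.im_apply_star_mul_self, Complex.star_def, ← mul_assoc,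
      Complex.mul_conj, Complex.im_ofReal_mul, mul_zero] at h
    rw [Complex.add_im]
    linarith
  have h1 := key 1
  have hI := key Complex.I
  simp only [one_mul, map_one, Complex.add_im, Complex.conj_I, neg_mul, Complex.mul_im,
    Complex.I_re, Complex.I_im, zero_mul, zero_add, Complex.neg_im] at h1 hI
  apply Complex.ext <;> simp only [Complex.conj_re, Complex.conj_im] <;> linarith

lemma apply_star (hf : IsStateOn f) (x : R) : f (star x) = conj (f x) := by
  simpa using hf.apply_star_mul_swap 1 x

lemma posSemidef_gram (hf : IsStateOn f) {ι : Type*} [Fintype ι] (c : ι → R) :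
    (Matrix.of fun i j => f (star (c i) * c j)).PosSemidef := by
  refine .of_dotProduct_mulVec_nonneg ?_ fun x => ?_
  · ext i j
    simp [hf.apply_star_mul_swap (c j) (c i)]
  · convert hf.2.2.2 (∑ i, x i • c i) using 1
    simp only [star_sum, star_smul, Finset.sum_mul_sum, smul_mul_smul_comm,
      ← hf.toLinearMap_apply, map_sum, map_smul]
    simp only [dotProduct, Matrix.mulVec, Finset.mul_sum, Matrix.of_apply, Pi.star_apply,
      RCLike.star_def, toLinearMap_apply, smul_eq_mul]
    exact Finset.sum_congr rfl fun _ _ => Finset.sum_congr rfl fun _ _ => by ring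

lemma sum_sum_mul_nonneg {S : Type*} [Ring S] [Algebra ℂ S] [StarRing S] [StarModule ℂ S]
    (hf : IsStateOn f) {g : S → ℂ} (hg : IsStateOn g) {ι : Type*} [Fintype ι] (c : ι → R)
    (d : ι → S) : 0 ≤ ∑ i, ∑ j, f (star (c i) * c j) * g (star (d i) * d j) := by
  simpa [dotProduct, Matrix.mulVec, Finset.mul_sum] using
    ((hf.posSemidef_gram c).hadamard (hg.posSemidef_gram d)).dotProduct_mulVec_nonneg 1

end IsStateOn

section Grading

variable {A : Type*} [Ring A] [Algebra ℂ A] [StarRing A]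

def IsHomogeneous (α : A ≃⋆ₐ[ℂ] A) (p : Bool) (a : A) : Prop :=
  α a = bif p then -a else a

variable {α : A ≃⋆ₐ[ℂ] A} {p q : Bool} {a b : A}

lemma isHomogeneous_one : IsHomogeneous α false 1 := map_one α

lemma IsHomogeneous.star (ha : IsHomogeneous α p a) : IsHomogeneous α p (star a) := by
  cases p <;> simp_all [IsHomogeneous, map_star]

lemma IsHomogeneous.mul (ha : IsHomogeneous α p a) (hb : IsHomogeneous α q b) :
    IsHomogeneous α (xor p q) (a * b) := by
  cases p <;> cases q <;> simp_all [IsHomogeneous]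

lemma IsHomogeneous.smul (ha : IsHomogeneous α p a) (c : ℂ) : IsHomogeneous α p (c • a) := by
  cases p <;> simp_all [IsHomogeneous]

lemma isHomogeneous_star_mul_of_ne (ha : IsHomogeneous α p a) (hb : IsHomogeneous α q b)
    (hpq : p ≠ q) : IsHomogeneous α true (star a * b) := by
  simpa [Bool.xor_iff_ne.mpr hpq] using ha.star.mul hb

noncomputable def homogeneousPart (α : A ≃⋆ₐ[ℂ] A) (p : Bool) (a : A) : A :=
  (2⁻¹ : ℂ) • (a + bif p then -α a else α a)

lemma isHomogeneous_homogeneousPart (hα : ∀ a, α (α a) = a) (p : Bool) (a : A) :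
    IsHomogeneous α p (homogeneousPart α p a) := by
  cases p <;> simp [IsHomogeneous, homogeneousPart, hα, add_comm]

lemma sum_homogeneousPart (α : A ≃⋆ₐ[ℂ] A) (a : A) : ∑ p, homogeneousPart α p a = a := by
  rw [Fintype.sum_bool]
  simp only [homogeneousPart, cond_true, cond_false]
  module

lemma LinearMap.apply_eq_zero_of_isHomogeneous (f : A →ₗ[ℂ] ℂ) (heven : ∀ a, f (α a) = f a)
    (ha : IsHomogeneous α true a) : f a = 0 := by
  have h := heven a
  rw [ha, cond_true, map_neg] at h
  exact self_eq_neg.mp h.symm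

lemma LinearMap.exists_isHomogeneous_apply_ne_zero (hα : ∀ a, α (α a) = a) (f : A →ₗ[ℂ] ℂ)
    (hodd : ¬ ∀ a, f (α a) = f a) : ∃ a, IsHomogeneous α true a ∧ f a ≠ 0 := by
  obtain ⟨a, ha⟩ := not_forall.mp hodd
  refine ⟨homogeneousPart α true a, isHomogeneous_homogeneousPart hα true a, ?_⟩
  simp only [homogeneousPart, cond_true, ← sub_eq_add_neg, map_smul, map_sub, smul_eq_mul]
  exact mul_ne_zero (by norm_num) (sub_ne_zero.mpr (Ne.symm ha))

lemma exists_eq_sum_tmul_homogeneousPart {B : Type*} [Ring B] [Algebra ℂ B] [StarRing B]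
    (α : A ≃⋆ₐ[ℂ] A) (β : B ≃⋆ₐ[ℂ] B) (t : A ⊗[ℂ] B) :
    ∃ (n : ℕ) (a : Fin n → A) (b : Fin n → B), t = ∑ i : Fin n × Bool × Bool,
      homogeneousPart α i.2.1 (a i.1) ⊗ₜ homogeneousPart β i.2.2 (b i.1) := by
  obtain ⟨n, a, b, rfl⟩ := TensorProduct.exists_sum_tmul_eq t
  refine ⟨n, a, b, ?_⟩
  simp only [Fintype.sum_prod_type, ← TensorProduct.tmul_sum, sum_homogeneousPart,
    ← TensorProduct.sum_tmul]

end Grading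

def kleinSign (p q : Bool) : ℂ := bif p && q then -1 else 1

section Fermi

variable {A B C : Type*} [Ring A] [Algebra ℂ A] [StarRing A] [Ring B] [Algebra ℂ B]
  [StarRing B] [Ring C] [StarRing C] [Algebra ℂ C]

structure IsFermiTensorProduct (α : A ≃⋆ₐ[ℂ] A) (β : B ≃⋆ₐ[ℂ] B) (e : A ⊗[ℂ] B ≃ₗ[ℂ] C) :
    Prop where
  mul_of_even : ∀ (a a' : A) (b b' : B), (β b = b ∨ α a' = a') →
    e (a ⊗ₜ b) * e (a' ⊗ₜ b') = e ((a * a') ⊗ₜ (b * b'))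
  mul_of_odd : ∀ (a a' : A) (b b' : B), β b = -b → α a' = -a' →
    e (a ⊗ₜ b) * e (a' ⊗ₜ b') = -e ((a * a') ⊗ₜ (b * b'))
  star_of_even : ∀ (a : A) (b : B), (α a = a ∨ β b = b) →
    star (e (a ⊗ₜ b)) = e (star a ⊗ₜ star b)
  star_of_odd : ∀ (a : A) (b : B), α a = -a → β b = -b →
    star (e (a ⊗ₜ b)) = -e (star a ⊗ₜ star b)

namespace IsFermiTensorProduct

variable {α : A ≃⋆ₐ[ℂ] A} {β : B ≃⋆ₐ[ℂ] B} {e : A ⊗[ℂ] B ≃ₗ[ℂ] C}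

lemma star_tmul (hC : IsFermiTensorProduct α β e) {p q : Bool} {a : A} {b : B}
    (ha : IsHomogeneous α p a) (hb : IsHomogeneous β q b) :
    star (e (a ⊗ₜ b)) = kleinSign p q • e (star a ⊗ₜ star b) := by
  cases p <;> cases q <;> simp only [IsHomogeneous, cond_true, cond_false] at ha hb <;>
    simp [kleinSign, hC.star_of_even, hC.star_of_odd, ha, hb]

lemma tmul_mul_tmul (hC : IsFermiTensorProduct α β e) {p q : Bool} (a : A) {a' : A} {b : B}
    (b' : B) (hb : IsHomogeneous β q b) (ha' : IsHomogeneous α p a') :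
    e (a ⊗ₜ b) * e (a' ⊗ₜ b') = kleinSign q p • e ((a * a') ⊗ₜ (b * b')) := by
  cases p <;> cases q <;> simp only [IsHomogeneous, cond_true, cond_false] at ha' hb <;>
    simp [kleinSign, hC.mul_of_even, hC.mul_of_odd, ha', hb]

variable {ω : A → ℂ} {φ : B → ℂ}

lemma apply_star_sum_mul_sum (hC : IsFermiTensorProduct α β e) (F : C →ₗ[ℂ] ℂ)
    (hF : ∀ a b, F (e (a ⊗ₜ b)) = ω a * φ b) {ι : Type*} [Fintype ι] {a : ι → A} {b : ι → B}
    {p q : ι → Bool} (ha : ∀ i, IsHomogeneous α (p i) (a i))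
    (hb : ∀ i, IsHomogeneous β (q i) (b i)) :
    F (star (∑ i, e (a i ⊗ₜ b i)) * ∑ i, e (a i ⊗ₜ b i)) = ∑ i, ∑ j,
      kleinSign (p i) (q i) * kleinSign (q i) (p j) *
        (ω (star (a i) * a j) * φ (star (b i) * b j)) := by
  have hterm : ∀ i j, star (e (a i ⊗ₜ b i)) * e (a j ⊗ₜ b j) =
      (kleinSign (p i) (q i) * kleinSign (q i) (p j)) •
        e ((star (a i) * a j) ⊗ₜ (star (b i) * b j)) := fun i j => by
    rw [hC.star_tmul (ha i) (hb i), smul_mul_assoc, hC.tmul_mul_tmul _ _ (hb i).star (ha j),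
      smul_smul]
  simp only [star_sum, Finset.sum_mul_sum, hterm, map_sum, map_smul, hF, smul_eq_mul]

variable [StarModule ℂ A] [StarModule ℂ B]

lemma apply_star_sum_mul_sum_nonneg (hC : IsFermiTensorProduct α β e) (hω : IsStateOn ω)
    (hφ : IsStateOn φ) (F : C →ₗ[ℂ] ℂ) (hF : ∀ a b, F (e (a ⊗ₜ b)) = ω a * φ b) {ι : Type*}
    [Fintype ι] {a : ι → A} {b : ι → B} {p q : ι → Bool}
    (ha : ∀ i, IsHomogeneous α (p i) (a i)) (hb : ∀ i, IsHomogeneous β (q i) (b i))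
    (heven : (∀ a, ω (α a) = ω a) ∨ (∀ b, φ (β b) = φ b)) :
    0 ≤ F (star (∑ i, e (a i ⊗ₜ b i)) * ∑ i, e (a i ⊗ₜ b i)) := by
  rw [hC.apply_star_sum_mul_sum F hF ha hb]
  rcases heven with hωe | hφe
  · convert hω.sum_sum_mul_nonneg hφ a b using 1
    refine Finset.sum_congr rfl fun i _ => Finset.sum_congr rfl fun j _ => ?_
    by_cases hp : p i = p j
    · rw [← hp]
      cases p i <;> cases q i <;> simp [kleinSign]
    · have : ω (star (a i) * a j) = 0 := hω.toLinearMap.apply_eq_zero_of_isHomogeneous hωe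
        (isHomogeneous_star_mul_of_ne (ha i) (ha j) hp)
      simp [this]
  · convert hω.sum_sum_mul_nonneg hφ (fun i => kleinSign (p i) (q i) • a i) b using 1
    refine Finset.sum_congr rfl fun i _ => Finset.sum_congr rfl fun j _ => ?_
    by_cases hq : q i = q j
    · rw [hq, star_smul, smul_mul_smul_comm, hω.2.1]
      cases p i <;> cases p j <;> cases q j <;> simp [kleinSign]
    · have : φ (star (b i) * b j) = 0 := hφ.toLinearMap.apply_eq_zero_of_isHomogeneous hφe
        (isHomogeneous_star_mul_of_ne (hb i) (hb j) hq)
      simp [this]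

lemma im_apply_mul_conj_eq_zero (hC : IsFermiTensorProduct α β e) (hω : IsStateOn ω)
    (hφ : IsStateOn φ) (F : C →ₗ[ℂ] ℂ) (hF : ∀ a b, F (e (a ⊗ₜ b)) = ω a * φ b)
    (hpos : ∀ x, 0 ≤ F (star x * x)) {a : A} {b : B} (ha : IsHomogeneous α true a)
    (hb : IsHomogeneous β true b) : (ω a * conj (φ b)).im = 0 := by
  set x := e (a ⊗ₜ 1) + e (1 ⊗ₜ b)
  have hx : F (star x * x) =
      ω (star a * a) + (conj (ω a * conj (φ b)) - ω a * conj (φ b)) + φ (star b * b) := by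
    simp only [x, star_add, add_mul, mul_add, hC.star_tmul ha isHomogeneous_one,
      hC.star_tmul isHomogeneous_one hb, star_one, smul_mul_assoc,
      hC.tmul_mul_tmul _ _ isHomogeneous_one ha,
      hC.tmul_mul_tmul _ _ isHomogeneous_one isHomogeneous_one,
      hC.tmul_mul_tmul _ _ hb.star ha, hC.tmul_mul_tmul _ _ hb.star isHomogeneous_one,
      mul_one, one_mul, map_add, map_smul, hF, hω.apply_star, hφ.apply_star, hω.2.2.1,
      hφ.2.2.1]
    simp only [kleinSign, Bool.and_false, Bool.and_true, Bool.and_self, cond_false, cond_true,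
      smul_eq_mul, one_mul, neg_mul, map_mul, Complex.conj_conj]
    ring
  have him := (Complex.nonneg_iff.mp (hpos x)).2
  rw [hx] at him
  simp only [Complex.add_im, Complex.sub_im, Complex.conj_im, hω.im_apply_star_mul_self,
    hφ.im_apply_star_mul_self] at him
  linarith

lemma even_or_even_of_nonneg (hC : IsFermiTensorProduct α β e) (hα : ∀ a, α (α a) = a)
    (hβ : ∀ b, β (β b) = b) (hω : IsStateOn ω) (hφ : IsStateOn φ) (F : C →ₗ[ℂ] ℂ)
    (hF : ∀ a b, F (e (a ⊗ₜ b)) = ω a * φ b) (hpos : ∀ x, 0 ≤ F (star x * x)) :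
    (∀ a, ω (α a) = ω a) ∨ (∀ b, φ (β b) = φ b) := by
  by_contra h
  obtain ⟨a, ha, hωa⟩ := hω.toLinearMap.exists_isHomogeneous_apply_ne_zero hα (not_or.mp h).1
  obtain ⟨b, hb, hφb⟩ := hφ.toLinearMap.exists_isHomogeneous_apply_ne_zero hβ (not_or.mp h).2
  set z := ω a * conj (φ b)
  have hz : z ≠ 0 := mul_ne_zero hωa ((map_ne_zero _).mpr hφb)
  have him := hC.im_apply_mul_conj_eq_zero hω hφ F hF hpos (ha.smul (Complex.I / z)) hb
  rw [hω.2.1, mul_assoc, div_mul_cancel₀ _ hz, Complex.I_im] at him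
  exact one_ne_zero him

end IsFermiTensorProduct

end Fermi

theorem deFinetti_stmt7_general
    (A : Type) [CStarAlgebra A] (α : A ≃⋆ₐ[ℂ] A) (hα : ∀ a, α (α a) = a)
    (B : Type) [CStarAlgebra B] (β : B ≃⋆ₐ[ℂ] B) (hβ : ∀ b, β (β b) = b)
    (C : Type) [Ring C] [StarRing C] [Algebra ℂ C]
    (e : (A ⊗[ℂ] B) ≃ₗ[ℂ] C)
    -- Fermi multiplication rule: ε(b, a') = 1 when `b` or `a'` is even
    (hmul₁ : ∀ (a a' : A) (b b' : B), (β b = b ∨ α a' = a') →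
      e (a ⊗ₜ[ℂ] b) * e (a' ⊗ₜ[ℂ] b') = e ((a * a') ⊗ₜ[ℂ] (b * b')))
    -- Fermi multiplication rule: ε(b, a') = -1 when both `b` and `a'` are odd
    (hmul₂ : ∀ (a a' : A) (b b' : B), β b = -b → α a' = -a' →
      e (a ⊗ₜ[ℂ] b) * e (a' ⊗ₜ[ℂ] b') = -e ((a * a') ⊗ₜ[ℂ] (b * b')))
    -- Fermi involution: ε(a, b) = 1 when `a` or `b` is even
    (hstar₁ : ∀ (a : A) (b : B), (α a = a ∨ β b = b) →
      star (e (a ⊗ₜ[ℂ] b)) = e ((star a) ⊗ₜ[ℂ] (star b)))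
    -- Fermi involution: ε(a, b) = -1 when both `a` and `b` are odd
    (hstar₂ : ∀ (a : A) (b : B), α a = -a → β b = -b →
      star (e (a ⊗ₜ[ℂ] b)) = -e ((star a) ⊗ₜ[ℂ] (star b)))
    (ω : A → ℂ) (hω : IsStateOn ω)
    (φ : B → ℂ) (hφ : IsStateOn φ)
    (F : C → ℂ)
    (hFadd : ∀ x y, F (x + y) = F x + F y)
    (hFsmul : ∀ (c : ℂ) (x), F (c • x) = c * F x)
    (hF : ∀ a b, F (e (a ⊗ₜ[ℂ] b)) = ω a * φ b) :
    (∀ x : C, 0 ≤ F (star x * x)) ↔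
      ((∀ a, ω (α a) = ω a) ∨ (∀ b, φ (β b) = φ b)) := by
  have hC : IsFermiTensorProduct α β e := ⟨hmul₁, hmul₂, hstar₁, hstar₂⟩
  let L : C →ₗ[ℂ] ℂ := { toFun := F, map_add' := hFadd, map_smul' := hFsmul }
  change (∀ x, 0 ≤ L (star x * x)) ↔ _
  refine ⟨hC.even_or_even_of_nonneg hα hβ hω hφ L hF, fun heven x => ?_⟩
  obtain ⟨n, a, b, hx⟩ := exists_eq_sum_tmul_homogeneousPart α β (e.symm x)
  rw [← e.apply_symm_apply x, hx, map_sum]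
  exact hC.apply_star_sum_mul_sum_nonneg hω hφ L hF
    (fun _ => isHomogeneous_homogeneousPart hα _ _)
    (fun _ => isHomogeneous_homogeneousPart hβ _ _) heven

/-- Let `(A, α)` and `(B, β)` be unital Z₂-graded C*-algebras, `ω` a state on
`A` and `φ` a state on `B`.  Let `C` be the algebraic Fermi tensor product `A ⊛₀ B`: its
underlying ℂ-module is the algebraic tensor product (the linear equivalence `e`), with
multiplication and involution twisted by the Klein sign `ε` on homogeneous elements.
Then the product functional `F`, determined by `F(a ⊛ b) = ω(a)φ(b)`, is positive if and
only if at least one of `ω`, `φ` is even. -/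
theorem deFinetti_stmt7
    (A : Type) [CStarAlgebra A] (α : A ≃⋆ₐ[ℂ] A) (hα : ∀ a, α (α a) = a)
    (B : Type) [CStarAlgebra B] (β : B ≃⋆ₐ[ℂ] B) (hβ : ∀ b, β (β b) = b)
    (C : Type) [Ring C] [StarRing C] [Algebra ℂ C]
    (e : (A ⊗[ℂ] B) ≃ₗ[ℂ] C)
    (hone : e ((1 : A) ⊗ₜ[ℂ] (1 : B)) = 1)
    -- Fermi multiplication rule: ε(b, a') = 1 when `b` or `a'` is even
    (hmul₁ : ∀ (a a' : A) (b b' : B), (β b = b ∨ α a' = a') →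
      e (a ⊗ₜ[ℂ] b) * e (a' ⊗ₜ[ℂ] b') = e ((a * a') ⊗ₜ[ℂ] (b * b')))
    -- Fermi multiplication rule: ε(b, a') = -1 when both `b` and `a'` are odd
    (hmul₂ : ∀ (a a' : A) (b b' : B), β b = -b → α a' = -a' →
      e (a ⊗ₜ[ℂ] b) * e (a' ⊗ₜ[ℂ] b') = -e ((a * a') ⊗ₜ[ℂ] (b * b')))
    -- Fermi involution: ε(a, b) = 1 when `a` or `b` is even
    (hstar₁ : ∀ (a : A) (b : B), (α a = a ∨ β b = b) →
      star (e (a ⊗ₜ[ℂ] b)) = e ((star a) ⊗ₜ[ℂ] (star b)))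
    -- Fermi involution: ε(a, b) = -1 when both `a` and `b` are odd
    (hstar₂ : ∀ (a : A) (b : B), α a = -a → β b = -b →
      star (e (a ⊗ₜ[ℂ] b)) = -e ((star a) ⊗ₜ[ℂ] (star b)))
    (ω : A → ℂ) (hω : IsStateOn ω)
    (φ : B → ℂ) (hφ : IsStateOn φ)
    (F : C → ℂ)
    (hFadd : ∀ x y, F (x + y) = F x + F y)
    (hFsmul : ∀ (c : ℂ) (x), F (c • x) = c * F x)
    (hF : ∀ a b, F (e (a ⊗ₜ[ℂ] b)) = ω a * φ b) :
    (∀ x : C, 0 ≤ F (star x * x)) ↔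
      ((∀ a, ω (α a) = ω a) ∨ (∀ b, φ (β b) = φ b)) :=
  deFinetti_stmt7_general A α hα B β hβ C e hmul₁ hmul₂ hstar₁ hstar₂ ω hω φ hφ F hFadd hFsmul hF
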